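/- arXiv:1612.00519 — 2 statements merged into one kernel-verified Lean document; each statement's English description precedes it below -/
import Mathlib

section
/- There exists a constant c > 0 such that every sequence of Leja points z₁, z₂, … on [−1,1] satisfies the distancing rule: for every n ≥ 2 and all 1 ≤ j, k ≤ n with j ≠ k, |z_j − z_k| ≥ c( √(1−|z_j|)/n + √(1−|z_k|)/n + 1/n² ). -/
/-!
Lift to the unit circle: if `v i` is the point of the upper unit semicircle above `z i`, then
`Q(u) = ∏_{i<k} (u - v i)(u - conj (v i))` satisfies `|Q u| = 2^(k-1) ∏_{i<k} |Re u - z i|` on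
`|u| = 1`. So the Leja property says that `|Q|` attains its maximum over the circle at `v k`, while
`v j` is a root of `Q`. The maximum principle for the reversed polynomial gives
`|Q u| ≤ max|Q| |u|^deg` outside the disc, hence a Cauchy estimate on discs of radius
`1/(deg+1)` bounds `|Q'|` by `e (deg+1) max|Q|` on the closed unit disc, and the mean value
theorem forces `|v k - v j| ≥ 1/(e (deg+1)) ≥ 1/(6n)`. On the upper semicircle,
`4 |Re a - Re b| ≥ |a - b| (|a - b| + Im a + Im b)` and `Im (v i) ≥ √(1 - |z i|)`, which turns this
into the distancing rule.
-/

/-- `z : ℕ → ℝ` (indices `1, 2, …`) is a sequence of Leja points on `[-1,1]`: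
`z 1 ∈ [-1,1]` is arbitrary, and for `n ≥ 2`, `z n ∈ [-1,1]` maximizes
`∏_{j=1}^{n-1} |y - z j|` over `y ∈ [-1,1]`. -/
def IsLejaSeq (z : ℕ → ℝ) : Prop :=
  z 1 ∈ Set.Icc (-1 : ℝ) 1 ∧
  ∀ n : ℕ, 2 ≤ n → z n ∈ Set.Icc (-1 : ℝ) 1 ∧
    ∀ y ∈ Set.Icc (-1 : ℝ) 1,
      ∏ j ∈ Finset.Ico 1 n, |y - z j| ≤ ∏ j ∈ Finset.Ico 1 n, |z n - z j|

open Polynomial Metric ComplexConjugate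

namespace Polynomial

variable {p : ℂ[X]} {M : ℝ}

theorem norm_eval_le_of_norm_le_one (h : ∀ u ∈ sphere (0 : ℂ) 1, ‖p.eval u‖ ≤ M) {z : ℂ}
    (hz : ‖z‖ ≤ 1) : ‖p.eval z‖ ≤ M := by
  refine Complex.norm_le_of_forall_mem_frontier_norm_le (isBounded_ball (x := 0) (r := 1))
    p.differentiable.diffContOnCl (fun u hu => h u ?_) ?_
  · rwa [frontier_ball 0 one_ne_zero] at hu
  · rwa [closure_ball 0 one_ne_zero, mem_closedBall_zero_iff]

theorem eval_reflect_inv_mul_pow {D : ℕ} (hp : p.natDegree ≤ D) {x : ℂ} (hx : x ≠ 0) :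
    (reflect D p).eval x⁻¹ * x ^ D = p.eval x := by
  let := invertibleOfNonzero hx
  simpa [invOf_eq_inv] using eval₂_reflect_mul_pow (RingHom.id ℂ) x D p hp

theorem norm_eval_le_mul_max_pow {D : ℕ} (hp : p.natDegree ≤ D)
    (h : ∀ u ∈ sphere (0 : ℂ) 1, ‖p.eval u‖ ≤ M) (z : ℂ) : ‖p.eval z‖ ≤ M * max 1 ‖z‖ ^ D := by
  rcases le_total ‖z‖ 1 with hz | hz
  · rw [max_eq_left hz, one_pow, mul_one]
    exact norm_eval_le_of_norm_le_one h hz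
  have hreflect : ∀ u ∈ sphere (0 : ℂ) 1, ‖(reflect D p).eval u‖ ≤ M := by
    intro u hu
    rw [mem_sphere_zero_iff_norm] at hu
    have hu_inv : u⁻¹ ∈ sphere (0 : ℂ) 1 := by
      rw [mem_sphere_zero_iff_norm, norm_inv, hu, inv_one]
    have hu_inv_ne : u⁻¹ ≠ 0 := ne_zero_of_mem_unit_sphere ⟨_, hu_inv⟩
    calc ‖(reflect D p).eval u‖ = ‖(reflect D p).eval u⁻¹⁻¹ * u⁻¹ ^ D‖ := by
          rw [inv_inv, norm_mul, norm_pow, norm_inv, hu, inv_one, one_pow, mul_one]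
      _ = ‖p.eval u⁻¹‖ := by rw [eval_reflect_inv_mul_pow hp hu_inv_ne]
      _ ≤ M := h _ hu_inv
  have hz0 : z ≠ 0 := norm_pos_iff.mp (one_pos.trans_le hz)
  rw [max_eq_right hz, ← eval_reflect_inv_mul_pow hp hz0, norm_mul, norm_pow]
  gcongr
  exact norm_eval_le_of_norm_le_one hreflect (by rw [norm_inv]; exact inv_le_one_of_one_le₀ hz)

theorem norm_eval_derivative_le {D : ℕ} (hp : p.natDegree ≤ D)
    (h : ∀ u ∈ sphere (0 : ℂ) 1, ‖p.eval u‖ ≤ M) {z : ℂ} (hz : ‖z‖ ≤ 1) :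
    ‖p.derivative.eval z‖ ≤ Real.exp 1 * (D + 1) * M := by
  set r : ℝ := ((D + 1 : ℕ) : ℝ)⁻¹ with hr_def
  have hr : 0 < r := by positivity
  have hsphere : ∀ w ∈ sphere z r, ‖p.eval w‖ ≤ M * Real.exp 1 := by
    intro w hw
    have hM : 0 ≤ M := (norm_nonneg _).trans (h 1 (by simp))
    have hw_le : max 1 ‖w‖ ≤ 1 + r := by
      refine max_le (by linarith) ?_
      calc ‖w‖ ≤ ‖z‖ + ‖w - z‖ := norm_le_norm_add_norm_sub' w z
        _ ≤ 1 + r := by rw [mem_sphere_iff_norm.mp hw]; linarith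
    calc ‖p.eval w‖ ≤ M * max 1 ‖w‖ ^ D := norm_eval_le_mul_max_pow hp h w
      _ ≤ M * (1 + r) ^ (D + 1) := by
          gcongr
          exact (pow_le_pow_left₀ (by positivity) hw_le D).trans
            (pow_le_pow_right₀ (by linarith) D.le_succ)
      _ ≤ M * Real.exp 1 := by gcongr; exact Real.one_add_inv_pow_le_exp
  have hcauchy := Complex.norm_deriv_le_of_forall_mem_sphere_norm_le hr
    p.differentiable.diffContOnCl hsphere
  rw [Polynomial.deriv, hr_def, div_inv_eq_mul] at hcauchy
  push_cast at hcauchy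
  linarith

theorem inv_le_norm_sub_of_eval_eq_zero {D : ℕ} (hp : p.natDegree ≤ D) {a b : ℂ}
    (ha : a ∈ sphere (0 : ℂ) 1) (hb : b ∈ sphere (0 : ℂ) 1)
    (hmax : IsMaxOn (fun u => ‖p.eval u‖) (sphere 0 1) a) (ha0 : p.eval a ≠ 0)
    (hb0 : p.eval b = 0) :
    (Real.exp 1 * (D + 1))⁻¹ ≤ ‖a - b‖ := by
  have hderiv : ∀ x ∈ closedBall (0 : ℂ) 1,
      ‖deriv (fun u => p.eval u) x‖ ≤ Real.exp 1 * (D + 1) * ‖p.eval a‖ := fun x hx => by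
    rw [Polynomial.deriv]
    exact norm_eval_derivative_le hp (isMaxOn_iff.mp hmax) (mem_closedBall_zero_iff.mp hx)
  have hmvt := (convex_closedBall (0 : ℂ) 1).norm_image_sub_le_of_norm_deriv_le
    (fun x _ => p.differentiableAt) hderiv (sphere_subset_closedBall hb)
    (sphere_subset_closedBall ha)
  rw [hb0, sub_zero] at hmvt
  have hpos : 0 < ‖p.eval a‖ := norm_pos_iff.mpr ha0
  rw [inv_le_iff_one_le_mul₀ (by positivity)]
  nlinarith

end Polynomial

theorem Complex.sub_mul_sub_conj_eq {u v : ℂ} (hu : ‖u‖ = 1) (hv : ‖v‖ = 1) :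
    (u - v) * (u - conj v) = u * (2 * (u.re - v.re : ℝ)) := by
  have hu' := Complex.mul_conj' u
  have hv' := Complex.mul_conj' v
  have hure := Complex.add_conj u
  have hvre := Complex.add_conj v
  rw [hu] at hu'
  rw [hv] at hv'
  push_cast at *
  linear_combination hv' - hu' + u * hure - u * hvre

theorem Complex.norm_sub_mul_sub_conj {u v : ℂ} (hu : ‖u‖ = 1) (hv : ‖v‖ = 1) :
    ‖(u - v) * (u - conj v)‖ = 2 * |u.re - v.re| := by
  rw [Complex.sub_mul_sub_conj_eq hu hv, norm_mul, hu, one_mul, norm_mul, Complex.norm_real,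
    Real.norm_eq_abs]
  norm_num

theorem Complex.norm_sub_mul_le_abs_re_sub {a b : ℂ} (ha : ‖a‖ = 1) (hb : ‖b‖ = 1)
    (ha_im : 0 ≤ a.im) (hb_im : 0 ≤ b.im) :
    ‖a - b‖ * (‖a - b‖ + a.im + b.im) ≤ 4 * |a.re - b.re| := by
  have ha2 : a.re ^ 2 + a.im ^ 2 = 1 := by
    rw [← Complex.normSq_add_mul_I, ← Complex.sq_norm, Complex.re_add_im, ha, one_pow]
  have hb2 : b.re ^ 2 + b.im ^ 2 = 1 := by
    rw [← Complex.normSq_add_mul_I, ← Complex.sq_norm, Complex.re_add_im, hb, one_pow]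
  have hδ : ‖a - b‖ ^ 2 = (a.re - b.re) ^ 2 + (a.im - b.im) ^ 2 := by
    rw [Complex.sq_norm, Complex.normSq_apply, Complex.sub_re, Complex.sub_im]; ring
  set δ := ‖a - b‖
  set x := a.re; set y := a.im; set x' := b.re; set y' := b.im
  -- `|cos θ - cos φ| = 2 sin((θ + φ)/2) |sin((θ - φ)/2)|` in Cartesian form
  have hchord : 2 * (x - x') ^ 2 = δ ^ 2 * (1 - x * x' + y * y') := by
    rw [hδ]
    linear_combination (2 * y' ^ 2 - (1 - x * x' + y * y')) * ha2
      + (2 * (1 - x ^ 2) - (1 - x * x' + y * y')) * hb2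
  have hmid : (δ + y + y') ^ 2 ≤ 8 * (1 - x * x' + y * y') := by
    nlinarith [sq_nonneg (δ - y - y'), sq_nonneg (x - x'), mul_nonneg ha_im hb_im]
  have hsq : (δ * (δ + y + y')) ^ 2 ≤ (4 * |x - x'|) ^ 2 := by
    rw [mul_pow, mul_pow, sq_abs]
    nlinarith [mul_le_mul_of_nonneg_left hmid (sq_nonneg δ)]
  exact le_of_pow_le_pow_left₀ two_ne_zero (by positivity) hsq

namespace Polynomial

theorem norm_eval_prod_sub_mul_sub_conj {ι : Type*} (s : Finset ι) (v : ι → ℂ)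
    (hv : ∀ i ∈ s, ‖v i‖ = 1) {u : ℂ} (hu : ‖u‖ = 1) :
    ‖(∏ i ∈ s, (X - C (v i)) * (X - C (conj (v i)))).eval u‖ =
      2 ^ s.card * ∏ i ∈ s, |u.re - (v i).re| := by
  rw [eval_prod, norm_prod, Finset.pow_card_mul_prod]
  refine Finset.prod_congr rfl fun i hi => ?_
  simp only [eval_mul, eval_sub, eval_X, eval_C]
  exact Complex.norm_sub_mul_sub_conj hu (hv i hi)

theorem natDegree_prod_sub_mul_sub_conj {ι : Type*} (s : Finset ι) (v : ι → ℂ) :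
    (∏ i ∈ s, (X - C (v i)) * (X - C (conj (v i)))).natDegree = 2 * s.card := by
  rw [natDegree_prod_of_monic _ _ fun i _ => (monic_X_sub_C _).mul (monic_X_sub_C _)]
  simp [natDegree_mul (X_sub_C_ne_zero _) (X_sub_C_ne_zero _), mul_comm]

end Polynomial

noncomputable def semicirclePoint (x : ℝ) : ℂ := ⟨x, √(1 - x ^ 2)⟩

@[simp] theorem semicirclePoint_re (x : ℝ) : (semicirclePoint x).re = x := rfl

@[simp] theorem semicirclePoint_im (x : ℝ) : (semicirclePoint x).im = √(1 - x ^ 2) := rfl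

theorem norm_semicirclePoint {x : ℝ} (hx : x ∈ Set.Icc (-1 : ℝ) 1) :
    ‖semicirclePoint x‖ = 1 := by
  have : 0 ≤ 1 - x ^ 2 := by nlinarith [hx.1, hx.2]
  rw [Complex.norm_def, Complex.normSq_apply, semicirclePoint_re, semicirclePoint_im,
    ← sq, ← sq, Real.sq_sqrt this]
  simp

theorem sqrt_one_sub_abs_le_semicirclePoint_im {x : ℝ} (hx : x ∈ Set.Icc (-1 : ℝ) 1) :
    √(1 - |x|) ≤ (semicirclePoint x).im := by
  have := abs_le.mpr ⟨hx.1, hx.2⟩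
  refine Real.sqrt_le_sqrt ?_
  nlinarith [abs_nonneg x, sq_abs x]

namespace IsLejaSeq

variable {z : ℕ → ℝ}

theorem mem_Icc (hz : IsLejaSeq z) {i : ℕ} (hi : 1 ≤ i) : z i ∈ Set.Icc (-1 : ℝ) 1 := by
  obtain rfl | hi := hi.eq_or_lt
  · exact hz.1
  · exact (hz.2 i hi).1

theorem prod_abs_sub_pos (hz : IsLejaSeq z) {k : ℕ} (hk : 2 ≤ k) :
    0 < ∏ i ∈ Finset.Ico 1 k, |z k - z i| := by
  obtain ⟨y, hy, hy_not⟩ := (Set.Icc_infinite (by norm_num : (-1 : ℝ) < 1)).exists_notMem_finset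
    ((Finset.Ico 1 k).image z)
  refine (Finset.prod_pos fun i hi => ?_).trans_le ((hz.2 k hk).2 y hy)
  exact abs_pos.mpr (sub_ne_zero.mpr fun h => hy_not (Finset.mem_image.mpr ⟨i, hi, h.symm⟩))

theorem inv_le_norm_semicirclePoint_sub (hz : IsLejaSeq z) {j k : ℕ} (hj : 1 ≤ j) (hjk : j < k) :
    (Real.exp 1 * (2 * (k - 1 : ℕ) + 1))⁻¹ ≤
      ‖semicirclePoint (z k) - semicirclePoint (z j)‖ := by
  have hk : 2 ≤ k := by omega
  set s := Finset.Ico 1 k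
  set v : ℕ → ℂ := fun i => semicirclePoint (z i)
  have hv : ∀ i, 1 ≤ i → v i ∈ sphere (0 : ℂ) 1 := fun i hi =>
    mem_sphere_zero_iff_norm.mpr (norm_semicirclePoint (hz.mem_Icc hi))
  set Q := ∏ i ∈ s, (X - C (v i)) * (X - C (conj (v i)))
  have hQ : ∀ u ∈ sphere (0 : ℂ) 1, ‖Q.eval u‖ = 2 ^ s.card * ∏ i ∈ s, |u.re - z i| :=
    fun u hu => norm_eval_prod_sub_mul_sub_conj s v
      (fun i hi => mem_sphere_zero_iff_norm.mp (hv i (Finset.mem_Ico.mp hi).1))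
      (mem_sphere_zero_iff_norm.mp hu)
  have hmax : IsMaxOn (fun u => ‖Q.eval u‖) (sphere 0 1) (v k) := by
    intro u hu
    have hu_re : u.re ∈ Set.Icc (-1 : ℝ) 1 :=
      abs_le.mp ((Complex.abs_re_le_norm u).trans (mem_sphere_zero_iff_norm.mp hu).le)
    change ‖Q.eval u‖ ≤ ‖Q.eval (v k)‖
    rw [hQ u hu, hQ _ (hv k (by omega))]
    exact mul_le_mul_of_nonneg_left ((hz.2 k hk).2 u.re hu_re) (by positivity)
  have hQ_ne : Q.eval (v k) ≠ 0 := by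
    rw [← norm_pos_iff, hQ _ (hv k (by omega))]
    exact mul_pos (by positivity) (hz.prod_abs_sub_pos hk)
  have hQ_root : Q.eval (v j) = 0 := by
    rw [eval_prod]
    exact Finset.prod_eq_zero (Finset.mem_Ico.mpr ⟨hj, hjk⟩) (by simp)
  have hdeg : Q.natDegree = 2 * (k - 1) := by
    rw [natDegree_prod_sub_mul_sub_conj, Nat.card_Ico]
  exact_mod_cast
    Q.inv_le_norm_sub_of_eval_eq_zero hdeg.le (hv k (by omega)) (hv j hj) hmax hQ_ne hQ_root

theorem distancing_of_lt (hz : IsLejaSeq z) {n j k : ℕ} (hj : 1 ≤ j) (hjk : j < k) (hkn : k ≤ n) :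
    1 / 144 * (√(1 - |z j|) / n + √(1 - |z k|) / n + 1 / (n : ℝ) ^ 2) ≤ |z j - z k| := by
  have hzj := hz.mem_Icc hj
  have hzk := hz.mem_Icc (hj.trans hjk.le)
  set a := semicirclePoint (z k)
  set b := semicirclePoint (z j)
  set A := √(1 - |z k|)
  set B := √(1 - |z j|)
  have hn : (0 : ℝ) < n := by exact_mod_cast (by omega : 0 < n)
  have hδ : 1 / (6 * n) ≤ ‖a - b‖ := by
    refine le_trans ?_ (hz.inv_le_norm_semicirclePoint_sub hj hjk)
    have hkn' : ((k - 1 : ℕ) : ℝ) + 1 ≤ n := by exact_mod_cast (by omega : k - 1 + 1 ≤ n)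
    rw [one_div]
    refine inv_anti₀ (by positivity) ?_
    nlinarith [Real.exp_one_lt_three, Real.exp_pos 1]
  have hchord := Complex.norm_sub_mul_le_abs_re_sub (norm_semicirclePoint hzk)
    (norm_semicirclePoint hzj) (Real.sqrt_nonneg _) (Real.sqrt_nonneg _)
  rw [semicirclePoint_re, semicirclePoint_re, abs_sub_comm] at hchord
  have hA := sqrt_one_sub_abs_le_semicirclePoint_im hzk
  have hB := sqrt_one_sub_abs_le_semicirclePoint_im hzj
  have hAB : 0 ≤ A + B := by positivity
  calc 1 / 144 * (B / n + A / n + 1 / (n : ℝ) ^ 2)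
      ≤ 1 / (6 * n) * (1 / (6 * n) + A + B) / 4 := by
        field_simp
        nlinarith
    _ ≤ ‖a - b‖ * (‖a - b‖ + a.im + b.im) / 4 := by gcongr
    _ ≤ |z j - z k| := by linarith

end IsLejaSeq

/-- Leja points on `[-1,1]` satisfy the Taylor–Totik distancing rule: there is a
constant `c > 0` such that for every Leja sequence, every `n ≥ 2` and all
`1 ≤ j, k ≤ n` with `j ≠ k`,
`|z j - z k| ≥ c(√(1-|z j|)/n + √(1-|z k|)/n + 1/n²)`. -/
theorem leja_points_satisfy_distancing_rule :
    ∃ c : ℝ, 0 < c ∧ ∀ z : ℕ → ℝ, IsLejaSeq z →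
      ∀ n : ℕ, 2 ≤ n → ∀ j k : ℕ, 1 ≤ j → j ≤ n → 1 ≤ k → k ≤ n → j ≠ k →
        c * (Real.sqrt (1 - |z j|) / n + Real.sqrt (1 - |z k|) / n + 1 / (n : ℝ) ^ 2)
          ≤ |z j - z k| := by
  refine ⟨1 / 144, by norm_num, fun z hz n _ j k hj hjn hk hkn hjk => ?_⟩
  rcases hjk.lt_or_gt with h | h
  · exact hz.distancing_of_lt hj h hkn
  · rw [abs_sub_comm, add_comm (√(1 - |z j|) / n)]
    exact hz.distancing_of_lt hk h hjn
end

section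
/- Let n ≥ 1 and let p be a polynomial with complex coefficients of degree at most n − 1. Let x ∈ [−1,1] and let ρ := ρ_{1/n}(x) be the distance from x to the ellipse I_{1/n}. Then for every ζ ∈ ℂ with |ζ − x| ≤ ρ/2, |p′(ζ)| ≤ (2e/ρ) · max_{t ∈ [−1,1]} |p(t)|. -/
/-!
Write `z = (u + u⁻¹)/2` with `0 < ‖u‖ ≤ 1`. Then `u ^ (n-1) * p z` is a polynomial in `u` whose
modulus on the unit circle is at most `M = max_{[-1,1]} |p|`, so by the maximum principle
`|p z| ≤ M ‖u‖^{-(n-1)}`. Since `‖z - 1‖ + ‖z + 1‖ = ‖u‖ + ‖u‖⁻¹`, the closed region bounded by the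
ellipse `I_{1/n}` is where `‖u‖ ≥ R⁻¹` with `R = 1 + 1/n`, and there `|p| ≤ M R^{n-1} ≤ e M`.
The closed disc of radius `ρ` about `x` stays in that region, hence so does the circle of radius
`ρ/2` about `ζ`, and Cauchy's estimate on that circle gives the bound.
-/

/-- The ellipse `I_{1/n}` with foci `±1` and sum of semiaxes `1 + 1/n`, i.e. the image of
the circle `|w| = 1 + 1/n` under the Joukowski map `w ↦ (w + 1/w)/2`. -/
def joukowskiEllipse (n : ℕ) : Set ℂ :=
  {ζ : ℂ | ∃ w : ℂ, ‖w‖ = 1 + 1 / (n : ℝ) ∧ ζ = (w + w⁻¹) / 2}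

/-- `ρ_{1/n}(x)`: the distance in `ℂ` from `x ∈ [-1,1]` to the ellipse `I_{1/n}`. -/
noncomputable def rho (n : ℕ) (x : ℝ) : ℝ :=
  Metric.infDist (x : ℂ) (joukowskiEllipse n)

open Polynomial Metric Set

lemma eq_or_eq_inv_of_add_inv_eq {r R : ℝ} (hr : 0 < r) (hR : 0 < R) (h : r + r⁻¹ = R + R⁻¹) :
    r = R ∨ r = R⁻¹ := by
  have : (r - R) * (r * R - 1) = 0 := by
    field_simp at h; linear_combination h
  rcases mul_eq_zero.mp this with h | h
  · exact Or.inl (sub_eq_zero.mp h)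
  · exact Or.inr (eq_inv_of_mul_eq_one_left (sub_eq_zero.mp h))

lemma le_of_add_inv_le_add_inv {a r : ℝ} (ha : 0 < a) (ha1 : a ≤ 1) (hr : 0 < r)
    (h : r + r⁻¹ ≤ a + a⁻¹) : a ≤ r := by
  by_contra! hra
  have hfactor : 0 < (a - r) * (1 - r * a) := mul_pos (by linarith) (by nlinarith)
  have : r + r⁻¹ - (a + a⁻¹) = (a - r) * (1 - r * a) / (r * a) := by field_simp; ring
  have : 0 < r + r⁻¹ - (a + a⁻¹) := this ▸ div_pos hfactor (mul_pos hr ha)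
  linarith

lemma two_lt_add_inv_self {R : ℝ} (hR : 1 < R) : 2 < R + R⁻¹ := by
  have : R + R⁻¹ - 2 = (R - 1) ^ 2 / R := by field_simp; ring
  linarith [div_pos (pow_pos (sub_pos.mpr hR) 2) (zero_lt_one.trans hR)]

noncomputable def joukowski (u : ℂ) : ℂ := (u + u⁻¹) / 2

@[simp]
lemma joukowski_inv (u : ℂ) : joukowski u⁻¹ = joukowski u := by
  simp only [joukowski, inv_inv, add_comm]

lemma joukowski_eq_re_of_norm_eq_one {u : ℂ} (hu : ‖u‖ = 1) : joukowski u = u.re := by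
  have hinv : u⁻¹ = (starRingEnd ℂ) u := by
    rw [Complex.inv_def, Complex.normSq_eq_norm_sq, hu]; simp
  rw [joukowski, hinv, Complex.add_conj]
  push_cast
  ring

lemma norm_joukowski_sub_one_add_norm_joukowski_add_one {u : ℂ} (hu : u ≠ 0) :
    ‖joukowski u - 1‖ + ‖joukowski u + 1‖ = ‖u‖ + ‖u‖⁻¹ := by
  have hsub : joukowski u - 1 = (u - 1) ^ 2 / (2 * u) := by
    rw [joukowski]; field_simp; ring
  have hadd : joukowski u + 1 = (u + 1) ^ 2 / (2 * u) := by
    rw [joukowski]; field_simp; ring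
  have hpar : ‖u - 1‖ ^ 2 + ‖u + 1‖ ^ 2 = 2 * (‖u‖ ^ 2 + 1) := by
    simp only [Complex.sq_norm, Complex.normSq_apply, Complex.sub_re, Complex.sub_im,
      Complex.add_re, Complex.add_im, Complex.one_re, Complex.one_im]
    ring
  rw [hsub, hadd, norm_div, norm_div, norm_pow, norm_pow, norm_mul, Complex.norm_two]
  field_simp
  linear_combination hpar

lemma exists_joukowski_eq (z : ℂ) : ∃ u, u ≠ 0 ∧ ‖u‖ ≤ 1 ∧ joukowski u = z := by
  obtain ⟨s, hs⟩ := IsAlgClosed.exists_eq_mul_self (z ^ 2 - 1)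
  have hprod : (z + s) * (z - s) = 1 := by linear_combination hs
  have hne : z + s ≠ 0 := left_ne_zero_of_mul_eq_one hprod
  have hinv : (z + s)⁻¹ = z - s := (eq_inv_of_mul_eq_one_right hprod).symm
  have hJ : joukowski (z + s) = z := by rw [joukowski, hinv]; ring
  rcases le_or_gt ‖z + s‖ 1 with h | h
  · exact ⟨z + s, hne, h, hJ⟩
  · refine ⟨(z + s)⁻¹, inv_ne_zero hne, ?_, by rw [joukowski_inv, hJ]⟩
    rw [norm_inv]
    exact inv_le_one_of_one_le₀ h.le

lemma joukowski_image_sphere {R : ℝ} (hR : 0 < R) :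
    joukowski '' sphere 0 R = {z | ‖z - 1‖ + ‖z + 1‖ = R + R⁻¹} := by
  ext z
  constructor
  · rintro ⟨u, hu, rfl⟩
    rw [mem_sphere_zero_iff_norm] at hu
    have hu0 : u ≠ 0 := norm_pos_iff.mp (hu ▸ hR)
    exact (norm_joukowski_sub_one_add_norm_joukowski_add_one hu0).trans (by rw [hu])
  · intro hz
    obtain ⟨u, hu0, -, rfl⟩ := exists_joukowski_eq z
    replace hz := (norm_joukowski_sub_one_add_norm_joukowski_add_one hu0).symm.trans hz
    rcases eq_or_eq_inv_of_add_inv_eq (norm_pos_iff.mpr hu0) hR hz with h | h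
    · exact ⟨u, mem_sphere_zero_iff_norm.mpr h, rfl⟩
    · exact ⟨u⁻¹, mem_sphere_zero_iff_norm.mpr (by rw [norm_inv, h, inv_inv]), joukowski_inv u⟩

lemma exists_eval_eq_pow_mul_eval_joukowski (p : ℂ[X]) {m : ℕ} (hdeg : p.natDegree ≤ m) :
    ∃ q : ℂ[X], ∀ u ≠ 0, q.eval u = u ^ m * p.eval (joukowski u) := by
  refine ⟨∑ i ∈ Finset.range (m + 1), C (p.coeff i / 2 ^ i) * (X ^ 2 + 1) ^ i * X ^ (m - i),
    fun u hu => ?_⟩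
  rw [eval_eq_sum_range' (Nat.lt_succ_of_le hdeg), eval_finsetSum, Finset.mul_sum]
  refine Finset.sum_congr rfl fun i hi => ?_
  have hsq : u * joukowski u = (u ^ 2 + 1) / 2 := by rw [joukowski]; field_simp
  have hpow : u ^ m * joukowski u ^ i = u ^ (m - i) * ((u ^ 2 + 1) ^ i / 2 ^ i) := by
    rw [← div_pow, ← hsq, mul_pow, ← mul_assoc, ← pow_add,
      Nat.sub_add_cancel (Finset.mem_range_succ_iff.mp hi)]
  simp only [eval_mul, eval_C, eval_pow, eval_add, eval_X, eval_one]
  linear_combination (-p.coeff i) * hpow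

lemma norm_eval_joukowski_le {p : ℂ[X]} {m : ℕ} (hdeg : p.natDegree ≤ m) {M : ℝ}
    (hM : ∀ t ∈ Icc (-1 : ℝ) 1, ‖p.eval (t : ℂ)‖ ≤ M) {u : ℂ} (hu0 : u ≠ 0) (hu : ‖u‖ ≤ 1) :
    ‖p.eval (joukowski u)‖ ≤ M / ‖u‖ ^ m := by
  obtain ⟨q, hq⟩ := exists_eval_eq_pow_mul_eval_joukowski p hdeg
  have hcircle : ∀ v ∈ frontier (ball (0 : ℂ) 1), ‖q.eval v‖ ≤ M := by
    intro v hv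
    rw [frontier_ball 0 one_ne_zero, mem_sphere_zero_iff_norm] at hv
    rw [hq v (norm_pos_iff.mp (hv ▸ one_pos)), norm_mul, norm_pow, hv, one_pow, one_mul,
      joukowski_eq_re_of_norm_eq_one hv]
    exact hM _ (abs_le.mp (hv ▸ Complex.abs_re_le_norm v))
  have hdisk := Complex.norm_le_of_forall_mem_frontier_norm_le isBounded_ball
    q.differentiable.diffContOnCl hcircle
    (by rwa [closure_ball 0 one_ne_zero, mem_closedBall_zero_iff])
  rw [hq u hu0, norm_mul, norm_pow] at hdisk
  rw [le_div_iff₀ (pow_pos (norm_pos_iff.mpr hu0) m)]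
  linarith

theorem norm_eval_le_of_norm_sub_one_add_norm_add_one_le {p : ℂ[X]} {m : ℕ}
    (hdeg : p.natDegree ≤ m) {M : ℝ} (hM : ∀ t ∈ Icc (-1 : ℝ) 1, ‖p.eval (t : ℂ)‖ ≤ M)
    {R : ℝ} (hR : 1 ≤ R) {z : ℂ} (hz : ‖z - 1‖ + ‖z + 1‖ ≤ R + R⁻¹) :
    ‖p.eval z‖ ≤ M * R ^ m := by
  obtain ⟨u, hu0, hu1, rfl⟩ := exists_joukowski_eq z
  have hu : 0 < ‖u‖ := norm_pos_iff.mpr hu0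
  rw [norm_joukowski_sub_one_add_norm_joukowski_add_one hu0] at hz
  have hRu : R⁻¹ ≤ ‖u‖ := le_of_add_inv_le_add_inv (by positivity) (inv_le_one_of_one_le₀ hR) hu
    (by rwa [inv_inv, add_comm R⁻¹])
  have hM0 : 0 ≤ M := (norm_nonneg _).trans (hM 0 ⟨by norm_num, by norm_num⟩)
  calc ‖p.eval (joukowski u)‖ ≤ M / ‖u‖ ^ m := norm_eval_joukowski_le hdeg hM hu0 hu1
    _ ≤ M / R⁻¹ ^ m := by gcongr
    _ = M * R ^ m := by rw [inv_pow, div_inv_eq_mul]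

lemma closedBall_infDist_setOf_eq_subset_setOf_le {E : Type*} [NormedAddCommGroup E]
    [NormedSpace ℝ E] {f : E → ℝ} (hf : Continuous f) {x : E} {c : ℝ} (hx : f x < c) :
    closedBall x (infDist x {z | f z = c}) ⊆ {z | f z ≤ c} := by
  set r := infDist x {z | f z = c}
  have hball : ball x r ⊆ {z | f z < c} := by
    intro w hw
    show f w < c
    by_contra! hcw
    obtain ⟨z, hz, hfz⟩ := (convex_ball x r).isPreconnected.intermediate_value
      (mem_ball_self (pos_of_mem_ball hw)) hw hf.continuousOn ⟨hx.le, hcw⟩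
    exact (mem_ball'.mp hz).not_ge (infDist_le_dist_of_mem hfz)
  rcases eq_or_ne r 0 with hr | hr
  · rw [hr, closedBall_zero, singleton_subset_iff]
    exact hx.le
  · rw [← closure_ball x hr]
    exact (closure_mono hball).trans (closure_lt_subset_le hf continuous_const)

lemma joukowskiEllipse_eq (n : ℕ) :
    joukowskiEllipse n =
      {z : ℂ | ‖z - 1‖ + ‖z + 1‖ = (1 + 1 / (n : ℝ)) + (1 + 1 / (n : ℝ))⁻¹} := by
  rw [← joukowski_image_sphere (by positivity)]
  ext z
  simp [joukowskiEllipse, joukowski, eq_comm]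

lemma norm_sub_one_add_norm_add_one_of_mem_Icc {x : ℝ} (hx : x ∈ Icc (-1 : ℝ) 1) :
    ‖(x : ℂ) - 1‖ + ‖(x : ℂ) + 1‖ = 2 := by
  rw [← Complex.ofReal_one, ← Complex.ofReal_sub, ← Complex.ofReal_add, Complex.norm_real,
    Complex.norm_real, Real.norm_eq_abs, Real.norm_eq_abs, abs_of_nonpos (by linarith [hx.2]),
    abs_of_nonneg (by linarith [hx.1])]
  ring

lemma one_lt_one_add_one_div {n : ℕ} (hn : 1 ≤ n) : 1 < 1 + 1 / (n : ℝ) :=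
  lt_add_of_pos_right 1 (one_div_pos.mpr (Nat.cast_pos.mpr hn))

lemma norm_sub_one_add_norm_add_one_lt {n : ℕ} (hn : 1 ≤ n) {x : ℝ} (hx : x ∈ Icc (-1 : ℝ) 1) :
    ‖(x : ℂ) - 1‖ + ‖(x : ℂ) + 1‖ < (1 + 1 / (n : ℝ)) + (1 + 1 / (n : ℝ))⁻¹ := by
  rw [norm_sub_one_add_norm_add_one_of_mem_Icc hx]
  exact two_lt_add_inv_self (one_lt_one_add_one_div hn)

lemma rho_pos {n : ℕ} (hn : 1 ≤ n) {x : ℝ} (hx : x ∈ Icc (-1 : ℝ) 1) : 0 < rho n x := by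
  have hR : 0 < 1 + 1 / (n : ℝ) := by positivity
  have hne : (joukowskiEllipse n).Nonempty := by
    rw [joukowskiEllipse_eq, ← joukowski_image_sphere hR]
    exact (NormedSpace.sphere_nonempty.mpr hR.le).image _
  have hclosed : IsClosed (joukowskiEllipse n) := by
    rw [joukowskiEllipse_eq]
    exact isClosed_eq (by fun_prop) continuous_const
  refine (hclosed.notMem_iff_infDist_pos hne).mp fun hxE => ?_
  rw [joukowskiEllipse_eq] at hxE
  exact (norm_sub_one_add_norm_add_one_lt hn hx).ne hxE

lemma one_add_one_div_pow_pred_le_exp_one (n : ℕ) : (1 + 1 / (n : ℝ)) ^ (n - 1) ≤ Real.exp 1 :=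
  calc (1 + 1 / (n : ℝ)) ^ (n - 1) ≤ (1 + 1 / (n : ℝ)) ^ n :=
        pow_le_pow_right₀ (le_add_of_nonneg_right (by positivity)) (Nat.sub_le n 1)
    _ ≤ Real.exp 1 := by simpa only [one_div] using Real.one_add_inv_pow_le_exp

lemma norm_eval_le_of_mem_closedBall_rho {n : ℕ} (hn : 1 ≤ n) {p : ℂ[X]}
    (hdeg : p.natDegree ≤ n - 1) {M : ℝ} (hM : ∀ t ∈ Icc (-1 : ℝ) 1, ‖p.eval (t : ℂ)‖ ≤ M)
    {x : ℝ} (hx : x ∈ Icc (-1 : ℝ) 1) {z : ℂ} (hz : z ∈ closedBall (x : ℂ) (rho n x)) :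
    ‖p.eval z‖ ≤ Real.exp 1 * M := by
  rw [rho, joukowskiEllipse_eq] at hz
  have hM0 : 0 ≤ M := (norm_nonneg _).trans (hM 0 ⟨by norm_num, by norm_num⟩)
  calc ‖p.eval z‖ ≤ M * (1 + 1 / (n : ℝ)) ^ (n - 1) :=
        norm_eval_le_of_norm_sub_one_add_norm_add_one_le hdeg hM (one_lt_one_add_one_div hn).le
          (closedBall_infDist_setOf_eq_subset_setOf_le (f := fun w => ‖w - 1‖ + ‖w + 1‖)
            (by fun_prop) (norm_sub_one_add_norm_add_one_lt hn hx) hz)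
    _ ≤ M * Real.exp 1 := by gcongr; exact one_add_one_div_pow_pred_le_exp_one n
    _ = Real.exp 1 * M := mul_comm _ _

/-- Bernstein–Walsh/Cauchy estimate: if `p` is a polynomial of degree at most `n - 1`,
`x ∈ [-1,1]`, `ρ = ρ_{1/n}(x)`, and `|ζ - x| ≤ ρ/2`, then
`|p′(ζ)| ≤ (2e/ρ) max_{t ∈ [-1,1]} |p(t)|`. -/
theorem deriv_bound_near_interval (n : ℕ) (hn : 1 ≤ n) (p : Polynomial ℂ)
    (hdeg : p.natDegree ≤ n - 1) (x : ℝ) (hx : x ∈ Set.Icc (-1 : ℝ) 1)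
    (ζ : ℂ) (hζ : ‖ζ - (x : ℂ)‖ ≤ rho n x / 2) :
    ‖(Polynomial.derivative p).eval ζ‖ ≤ (2 * Real.exp 1 / rho n x) *
      sSup ((fun t : ℝ => ‖p.eval (t : ℂ)‖) '' Set.Icc (-1 : ℝ) 1) := by
  set M := sSup ((fun t : ℝ => ‖p.eval (t : ℂ)‖) '' Icc (-1 : ℝ) 1)
  have hM : ∀ t ∈ Icc (-1 : ℝ) 1, ‖p.eval (t : ℂ)‖ ≤ M := fun t ht =>
    le_csSup (isCompact_Icc.image (by fun_prop)).bddAbove (mem_image_of_mem _ ht)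
  have hρ := rho_pos hn hx
  have hsphere : ∀ z ∈ sphere ζ (rho n x / 2), ‖p.eval z‖ ≤ Real.exp 1 * M := by
    refine fun z hz => norm_eval_le_of_mem_closedBall_rho hn hdeg hM hx (mem_closedBall.mpr ?_)
    linarith [dist_triangle z ζ x, mem_sphere.mp hz, Complex.dist_eq ζ x]
  have hcauchy := Complex.norm_deriv_le_of_forall_mem_sphere_norm_le (half_pos hρ)
    p.differentiable.diffContOnCl hsphere
  rw [Polynomial.deriv] at hcauchy
  calc _ ≤ Real.exp 1 * M / (rho n x / 2) := hcauchy
    _ = (2 * Real.exp 1 / rho n x) * M := by field_simp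
end
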